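/- arXiv:math/0302270 — 4 statements merged into one kernel-verified Lean document; each statement's English description precedes it below -/
import Mathlib

section
/- Jacobi's triple product identity: for every complex number q with 0 < |q| < 1 and every nonzero complex number z, the bilateral series ∑_{k=-∞}^{∞} (-1)^k q^{k(k-1)/2} z^k converges absolutely and equals (q;q)_∞ · (z;q)_∞ · (q/z;q)_∞. -/
/-!
Cauchy's finite q-binomial theorem `(x;q)_n = ∑_k [n, k]_q (-1)^k q^{k(k-1)/2} x^k`, taken at
`x = z q^{-N}` and `n = 2N`, gives the finite triple product
`(z;q)_N (q/z;q)_N = ∑_{|m| ≤ N} [2N, N+m]_q (-1)^m q^{m(m-1)/2} z^m`.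
As `N → ∞` each Gaussian coefficient `[2N, N+m]_q = (q;q)_{2N} / ((q;q)_{N+m} (q;q)_{N-m})`
tends to `1/(q;q)_∞`, and all of them are bounded by one constant because `(q;q)_n` converges to
a nonzero limit, so Tannery's theorem lets the finite identity pass to the limit term by term.
-/

/-- The infinite q-shifted factorial `(a;q)_∞ = ∏_{j ≥ 0} (1 - a q^j)`. -/
noncomputable def qPochInf (a q : ℂ) : ℂ := ∏' j : ℕ, (1 - a * q ^ j)

open Filter Finset Topology

namespace JacobiTripleProduct

noncomputable def qPoch (a q : ℂ) (n : ℕ) : ℂ := ∏ j ∈ range n, (1 - a * q ^ j)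

noncomputable def qBinom (q : ℂ) (n k : ℕ) : ℂ :=
  if k ≤ n then qPoch q q n / (qPoch q q k * qPoch q q (n - k)) else 0

noncomputable def thetaTerm (q z : ℂ) (k : ℤ) : ℂ := (-1) ^ k * q ^ (k * (k - 1) / 2) * z ^ k

noncomputable def centralQBinom (q : ℂ) (N : ℕ) (m : ℤ) : ℂ :=
  if m.natAbs ≤ N then qBinom q (2 * N) ((N : ℤ) + m).toNat else 0

variable {q : ℂ}

section QPochhammer

variable {a : ℂ}

lemma qPoch_zero : qPoch a q 0 = 1 :=
  prod_range_zero _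

lemma qPoch_succ (n : ℕ) : qPoch a q (n + 1) = qPoch a q n * (1 - a * q ^ n) :=
  prod_range_succ _ n

lemma qPoch_succ' (n : ℕ) : qPoch a q (n + 1) = (1 - a) * qPoch (a * q) q n := by
  simp only [qPoch, prod_range_succ', pow_zero, mul_one, pow_succ', ← mul_assoc,
    mul_right_comm a q]
  exact mul_comm _ _

lemma tendsto_qPoch (hq : ‖q‖ < 1) (a : ℂ) :
    Tendsto (qPoch a q) atTop (𝓝 (qPochInf a q)) := by
  have hsum : Summable fun j : ℕ => -(a * q ^ j) :=
    ((summable_geometric_of_norm_lt_one hq).mul_left a).neg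
  unfold qPoch qPochInf
  simpa [sub_eq_add_neg] using
    (Complex.multipliable_one_add_of_summable hsum).hasProd.tendsto_prod_nat

lemma qPoch_ne_zero (ha : ∀ j, a * q ^ j ≠ 1) (n : ℕ) : qPoch a q n ≠ 0 :=
  prod_ne_zero_iff.2 fun j _ => sub_ne_zero.2 (ha j).symm

lemma qPochInf_ne_zero (hq : ‖q‖ < 1) (ha : ∀ j, a * q ^ j ≠ 1) : qPochInf a q ≠ 0 := by
  have hsum : Summable fun j : ℕ => ‖-(a * q ^ j)‖ := by
    simpa [norm_mul, norm_pow] using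
      (summable_geometric_of_lt_one (norm_nonneg q) hq).mul_left ‖a‖
  have hfactor (j : ℕ) : 1 + -(a * q ^ j) ≠ 0 := by
    simpa [← sub_eq_add_neg, sub_eq_zero] using (ha j).symm
  simpa [qPochInf, sub_eq_add_neg] using tprod_one_add_ne_zero_of_summable hfactor hsum

lemma mul_pow_ne_one (hq : ‖q‖ < 1) (j : ℕ) : q * q ^ j ≠ 1 := by
  intro h
  have : ‖q * q ^ j‖ < 1 := by
    rw [← pow_succ', norm_pow]
    exact pow_lt_one₀ (norm_nonneg q) hq (Nat.succ_ne_zero j)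
  simp [h] at this

end QPochhammer

section GaussianBinomial

lemma qBinom_zero_right (hq : ‖q‖ < 1) (n : ℕ) : qBinom q n 0 = 1 := by
  simp [qBinom, qPoch_zero, qPoch_ne_zero (mul_pow_ne_one hq)]

lemma qBinom_self (hq : ‖q‖ < 1) (n : ℕ) : qBinom q n n = 1 := by
  simp [qBinom, qPoch_zero, qPoch_ne_zero (mul_pow_ne_one hq)]

lemma qBinom_of_lt {n k : ℕ} (h : n < k) : qBinom q n k = 0 := by
  simp [qBinom, h]

lemma qBinom_succ_succ (hq : ‖q‖ < 1) {n k : ℕ} (hk : k ≤ n) :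
    qBinom q (n + 1) (k + 1) = qBinom q n (k + 1) + q ^ (n - k) * qBinom q n k := by
  obtain ⟨d, rfl⟩ := Nat.exists_eq_add_of_le hk
  rcases d with _ | d
  · simp [qBinom_self hq, qBinom_of_lt]
  simp only [qBinom, if_pos (by omega : k + 1 ≤ k + (d + 1) + 1),
    if_pos (by omega : k + 1 ≤ k + (d + 1)), if_pos (by omega : k ≤ k + (d + 1)),
    show k + (d + 1) + 1 - (k + 1) = d + 1 by omega, show k + (d + 1) - (k + 1) = d by omega,
    show k + (d + 1) - k = d + 1 by omega, qPoch_succ]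
  have hPk := qPoch_ne_zero (mul_pow_ne_one hq) k
  have hPd := qPoch_ne_zero (mul_pow_ne_one hq) d
  have hPn := qPoch_ne_zero (mul_pow_ne_one hq) (k + (d + 1))
  have hk1 : 1 - q * q ^ k ≠ 0 := sub_ne_zero.2 (mul_pow_ne_one hq k).symm
  have hd1 : 1 - q * q ^ d ≠ 0 := sub_ne_zero.2 (mul_pow_ne_one hq d).symm
  field_simp
  ring

lemma exists_norm_qBinom_le (hq : ‖q‖ < 1) : ∃ C, ∀ n k, ‖qBinom q n k‖ ≤ C := by
  have hP := tendsto_qPoch hq q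
  obtain ⟨A, hA⟩ := isBounded_iff_forall_norm_le.1 (Metric.isBounded_range_of_tendsto _ hP)
  obtain ⟨B, hB⟩ := isBounded_iff_forall_norm_le.1 (Metric.isBounded_range_of_tendsto _
    (hP.inv₀ (qPochInf_ne_zero hq (mul_pow_ne_one hq))))
  simp only [Set.forall_mem_range] at hA hB
  have hA0 : 0 ≤ A := (norm_nonneg _).trans (hA 0)
  have hB0 : 0 ≤ B := (norm_nonneg _).trans (hB 0)
  refine ⟨A * B * B, fun n k => ?_⟩
  unfold qBinom
  split_ifs
  · rw [div_eq_mul_inv, mul_inv, ← mul_assoc, norm_mul, norm_mul]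
    exact mul_le_mul (mul_le_mul (hA n) (hB k) (norm_nonneg _) hA0) (hB _) (norm_nonneg _)
      (mul_nonneg hA0 hB0)
  · rw [norm_zero]
    positivity

end GaussianBinomial

section ThetaTerm

variable {z : ℂ}

lemma triangle_add (k m : ℤ) :
    (k + m) * (k + m - 1) / 2 = k * (k - 1) / 2 + m * (m - 1) / 2 + m * k := by
  have hm := (Int.even_mul_pred_self m).two_dvd
  rw [show (k + m) * (k + m - 1) = k * (k - 1) + m * (m - 1) + 2 * (m * k) by ring,
    Int.add_mul_ediv_left _ _ two_ne_zero, Int.add_ediv_of_dvd_right hm]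

lemma thetaTerm_zero : thetaTerm q z 0 = 1 := by
  simp [thetaTerm]

lemma thetaTerm_natCast (k : ℕ) : thetaTerm q z k = q ^ (k * (k - 1) / 2) * (-z) ^ k := by
  have hexp : (k : ℤ) * ((k : ℤ) - 1) / 2 = ((k * (k - 1) / 2 : ℕ) : ℤ) := by
    rcases k with _ | k
    · simp
    · push_cast [Int.natCast_div, Nat.add_sub_cancel]
      ring_nf
  rw [thetaTerm, hexp, zpow_natCast, zpow_natCast, zpow_natCast, neg_pow z]
  ring

lemma thetaTerm_natCast_succ (k : ℕ) :
    thetaTerm q z (k + 1 : ℕ) = thetaTerm q z k * -(z * q ^ k) := by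
  rw [thetaTerm_natCast, thetaTerm_natCast, Nat.triangle_succ, pow_add, pow_succ]
  ring

lemma thetaTerm_add (hq : q ≠ 0) (hz : z ≠ 0) (k m : ℤ) :
    thetaTerm q z (k + m) = thetaTerm q z m * thetaTerm q (z * q ^ m) k := by
  simp only [thetaTerm]
  rw [triangle_add, zpow_add₀ hq, zpow_add₀ hq, zpow_mul,
    zpow_add₀ (by norm_num : (-1 : ℂ) ≠ 0), zpow_add₀ hz, mul_zpow]
  ring

lemma thetaTerm_neg_one : thetaTerm q z (-1) = -(q / z) := by
  simp [thetaTerm, div_eq_mul_inv]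

lemma thetaTerm_neg (hq : q ≠ 0) (k : ℤ) : thetaTerm q z (-k) = thetaTerm q (q / z) k := by
  have hexp : -k * (-k - 1) / 2 = k * (k - 1) / 2 + k := by
    rw [show -k * (-k - 1) = k * (k - 1) + 2 * k by ring, Int.add_mul_ediv_left _ _ two_ne_zero]
  simp only [thetaTerm]
  rw [hexp, zpow_add₀ hq, zpow_neg, zpow_neg, div_zpow, ← inv_zpow, inv_neg, inv_one]
  ring

lemma summable_norm_thetaTerm_natCast (hq : ‖q‖ < 1) (z : ℂ) :
    Summable fun n : ℕ => ‖thetaTerm q z n‖ := by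
  refine summable_of_ratio_norm_eventually_le (r := 1 / 2) (by norm_num) ?_
  have hsmall : ∀ᶠ n : ℕ in atTop, ‖z‖ * ‖q‖ ^ n ≤ 1 / 2 := by
    have := (tendsto_pow_atTop_nhds_zero_of_lt_one (norm_nonneg q) hq).const_mul ‖z‖
    rw [mul_zero] at this
    exact this.eventually_le_const (by norm_num)
  filter_upwards [hsmall] with n hn
  rw [norm_norm, norm_norm, thetaTerm_natCast_succ, norm_mul, norm_neg, norm_mul, norm_pow,
    mul_comm (1 / 2 : ℝ)]
  exact mul_le_mul_of_nonneg_left hn (norm_nonneg _)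

lemma summable_norm_thetaTerm (hq1 : ‖q‖ < 1) (hq : q ≠ 0) (z : ℂ) :
    Summable fun k : ℤ => ‖thetaTerm q z k‖ :=
  .of_nat_of_neg (summable_norm_thetaTerm_natCast hq1 z)
    (by simpa only [thetaTerm_neg hq] using summable_norm_thetaTerm_natCast hq1 (q / z))

end ThetaTerm

section FiniteIdentity

theorem qPoch_eq_sum_qBinom_mul_thetaTerm (hq : ‖q‖ < 1) (x : ℂ) (n : ℕ) :
    qPoch x q n = ∑ k ∈ range (n + 1), qBinom q n k * thetaTerm q x k := by
  induction n with
  | zero => simp [qPoch_zero, qBinom_zero_right hq, thetaTerm_zero]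
  | succ n ih =>
    set c : ℕ → ℕ → ℂ := fun n k => qBinom q n k * thetaTerm q x k with hc
    have pascal : ∀ k ∈ range (n + 1),
        c (n + 1) (k + 1) = c n (k + 1) + c n k * -(x * q ^ n) := by
      intro k hk
      have hkn : k ≤ n := Nat.lt_succ_iff.1 (mem_range.1 hk)
      have hpow : q ^ (n - k) * q ^ k = q ^ n := by rw [← pow_add, Nat.sub_add_cancel hkn]
      simp only [hc, qBinom_succ_succ hq hkn, thetaTerm_natCast_succ, ← hpow]
      ring
    have hc0 : ∀ n, c n 0 = 1 := fun n => by simp [hc, qBinom_zero_right hq, thetaTerm_zero]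
    have htop : c n (n + 1) = 0 := by simp [hc, qBinom_of_lt]
    calc qPoch x q (n + 1)
        = ∑ k ∈ range (n + 1), c n k + ∑ k ∈ range (n + 1), c n k * -(x * q ^ n) := by
          rw [qPoch_succ, ih, ← sum_mul]; ring
      _ = ∑ k ∈ range (n + 1 + 1), c n k + ∑ k ∈ range (n + 1), c n k * -(x * q ^ n) := by
          rw [sum_range_succ (c n) (n + 1), htop, add_zero]
      _ = ∑ k ∈ range (n + 1 + 1), c (n + 1) k := by
          rw [sum_range_succ' (c (n + 1)), sum_congr rfl pascal, sum_add_distrib,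
            sum_range_succ' (c n) (n + 1), hc0, hc0]
          ring

lemma thetaTerm_neg_mul_qPoch (hq : q ≠ 0) {z : ℂ} (hz : z ≠ 0) (N : ℕ) :
    thetaTerm q z (-N) * qPoch (z / q ^ N) q (2 * N) = qPoch z q N * qPoch (q / z) q N := by
  induction N with
  | zero => simp [thetaTerm_zero, qPoch_zero]
  | succ N ih =>
    have hshift : thetaTerm q z (-(N + 1 : ℕ)) = thetaTerm q z (-N) * -(q ^ (N + 1) / z) := by
      rw [show -((N + 1 : ℕ) : ℤ) = -1 + -N by push_cast; ring, thetaTerm_add hq hz,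
        thetaTerm_neg_one, zpow_neg, zpow_natCast]
      field_simp
      ring
    have hends : qPoch (z / q ^ (N + 1)) q (2 * (N + 1))
        = (1 - z / q ^ (N + 1)) * qPoch (z / q ^ N) q (2 * N) * (1 - z * q ^ N) := by
      have hq1 : z / q ^ (N + 1) * q = z / q ^ N := by
        rw [pow_succ]
        field_simp
      have hq2 : z / q ^ (N + 1) * q ^ (2 * N + 1) = z * q ^ N := by
        field_simp
        ring
      rw [show 2 * (N + 1) = 2 * N + 1 + 1 by ring, qPoch_succ, qPoch_succ', hq1, hq2]
    have hfac : -(q ^ (N + 1) / z) * (1 - z / q ^ (N + 1)) = 1 - q / z * q ^ N := by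
      field_simp
      ring
    rw [hshift, hends, qPoch_succ, qPoch_succ]
    linear_combination (-(q ^ (N + 1) / z) * (1 - z / q ^ (N + 1)) * (1 - z * q ^ N)) * ih
      + qPoch z q N * qPoch (q / z) q N * (1 - z * q ^ N) * hfac

end FiniteIdentity

section CentralQBinom

lemma tendsto_centralQBinom (hq : ‖q‖ < 1) (m : ℤ) :
    Tendsto (fun N => centralQBinom q N m) atTop (𝓝 (qPochInf q q)⁻¹) := by
  have hP := tendsto_qPoch hq q
  have hP0 := qPochInf_ne_zero hq (mul_pow_ne_one hq)
  have hshift (m : ℤ) : Tendsto (fun N : ℕ => qPoch q q ((N : ℤ) + m).toNat) atTop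
      (𝓝 (qPochInf q q)) :=
    hP.comp (tendsto_atTop_atTop.2 fun b => ⟨b + m.natAbs, fun N hN => by omega⟩)
  have hdouble : Tendsto (fun N : ℕ => 2 * N) atTop atTop :=
    tendsto_atTop_atTop.2 fun b => ⟨b, fun N hN => by omega⟩
  have hlim := (hP.comp hdouble).div ((hshift m).mul (hshift (-m))) (mul_ne_zero hP0 hP0)
  rw [div_mul_cancel_left₀ hP0] at hlim
  refine hlim.congr' ?_
  filter_upwards [eventually_ge_atTop m.natAbs] with N hN
  rw [centralQBinom, if_pos (by omega), qBinom, if_pos (by omega),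
    show 2 * N - ((N : ℤ) + m).toNat = ((N : ℤ) + -m).toNat by omega]
  rfl

lemma exists_norm_centralQBinom_le (hq : ‖q‖ < 1) :
    ∃ C, ∀ N m, ‖centralQBinom q N m‖ ≤ C := by
  obtain ⟨C, hC⟩ := exists_norm_qBinom_le hq
  refine ⟨C, fun N m => ?_⟩
  unfold centralQBinom
  split_ifs
  · exact hC _ _
  · simpa using (norm_nonneg _).trans (hC 0 0)

lemma tsum_centralQBinom_mul_thetaTerm (hq1 : ‖q‖ < 1) (hq : q ≠ 0) {z : ℂ} (hz : z ≠ 0)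
    (N : ℕ) :
    ∑' m, centralQBinom q N m * thetaTerm q z m = qPoch z q N * qPoch (q / z) q N := by
  rw [tsum_eq_sum (s := Icc (-N : ℤ) N) fun m hm => by
      rw [centralQBinom, if_neg (by simp only [mem_Icc] at hm; omega), zero_mul],
    ← thetaTerm_neg_mul_qPoch hq hz, qPoch_eq_sum_qBinom_mul_thetaTerm hq1, mul_sum]
  refine sum_nbij' (fun m => ((N : ℤ) + m).toNat) (fun k => k - N) ?_ ?_ ?_ ?_ ?_
  · intro m hm
    simp only [mem_Icc, mem_range] at hm ⊢
    omega
  · intro k hk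
    simp only [mem_Icc, mem_range] at hk ⊢
    omega
  · intro m hm
    simp only [mem_Icc] at hm
    omega
  · intro k _
    omega
  · intro m hm
    simp only [mem_Icc] at hm
    have hk : ((((N : ℤ) + m).toNat : ℕ) : ℤ) = m + N := by omega
    have hsplit := thetaTerm_add hq hz (m + N) (-N)
    rw [add_neg_cancel_right, zpow_neg, zpow_natCast, ← div_eq_mul_inv] at hsplit
    rw [centralQBinom, if_pos (by omega), hk, hsplit]
    ring

end CentralQBinom

end JacobiTripleProduct

open JacobiTripleProduct

/-- Jacobi's triple product identity: for `0 < |q| < 1` and `z ≠ 0`,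
the bilateral series `∑_{k=-∞}^{∞} (-1)^k q^{k(k-1)/2} z^k` converges absolutely
and equals `(q;q)_∞ (z;q)_∞ (q/z;q)_∞`. -/
theorem jacobi_triple_product (q z : ℂ) (hq0 : 0 < ‖q‖)
    (hq1 : ‖q‖ < 1) (hz : z ≠ 0) :
    Summable (fun k : ℤ =>
      ‖(-1 : ℂ) ^ k * q ^ (k * (k - 1) / 2) * z ^ k‖) ∧
    ∑' k : ℤ, (-1 : ℂ) ^ k * q ^ (k * (k - 1) / 2) * z ^ k =
      qPochInf q q * qPochInf z q * qPochInf (q / z) q := by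
  have hq : q ≠ 0 := norm_pos_iff.1 hq0
  have hsum := summable_norm_thetaTerm hq1 hq z
  refine ⟨hsum, ?_⟩
  obtain ⟨C, hC⟩ := exists_norm_centralQBinom_le hq1
  have hlim := tendsto_tsum_of_dominated_convergence (hsum.mul_left C)
    (fun m => (tendsto_centralQBinom hq1 m).mul_const (thetaTerm q z m))
    (Eventually.of_forall fun N m => by
      rw [norm_mul]; exact mul_le_mul_of_nonneg_right (hC N m) (norm_nonneg _))
  simp only [tsum_centralQBinom_mul_thetaTerm hq1 hq hz, tsum_mul_left] at hlim
  have hlimit := tendsto_nhds_unique hlim ((tendsto_qPoch hq1 z).mul (tendsto_qPoch hq1 (q / z)))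
  rw [inv_mul_eq_iff_eq_mul₀ (qPochInf_ne_zero hq1 (mul_pow_ne_one hq1))] at hlimit
  rw [mul_assoc, ← hlimit]
  rfl
end

section
/- Rothe's summation formula: for all real (or complex) numbers A, B, C with A + Bk ≠ 0 for every integer k with 0 ≤ k ≤ n, and for every nonnegative integer n, one has C(A+C, n) = ∑_{k=0}^{n} (A/(A+Bk)) · C(A+Bk, k) · C(C-Bk, n-k), where C(x, m) = x(x-1)⋯(x-m+1)/m! denotes the generalized binomial coefficient. -/
/-!
Fix `A`, `B` and regard both sides as functions of `C`. Both satisfy Pascal's recurrence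
`f (n + 1) C = f (n + 1) (C - 1) + f n (C - 1)`, so by induction on `n` their difference at level
`N = n + 1` is a polynomial in `C` invariant under `C ↦ C - 1`, hence constant, and it suffices to
compare the two sides at the single point `C = n - A`. There the left side is `(n choose N) = 0`.
On the right, upper negation and `(x choose k) (x - k choose N - k) = (N choose k) (x choose N)`
turn the `k`-th summand into `(-1)^(N - k) (N choose k) · (A / N) (A + Bk - 1 choose N - 1)`,
so the sum is an `N`-th finite difference of a polynomial of degree `< N` in `k`, and vanishes.
-/

noncomputable def genBinom (x : ℂ) (m : ℕ) : ℂ :=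
  (∏ i ∈ Finset.range m, (x - i)) / m.factorial

open Finset Polynomial

namespace Ring

variable {R : Type*} [Ring R] [BinomialRing R]

theorem choose_sub_one_add (x : R) (k : ℕ) :
    choose x (k + 1) = choose (x - 1) (k + 1) + choose (x - 1) k := by
  rw [← sub_add_cancel x 1, choose_succ_succ, add_sub_cancel_right, add_comm]

theorem choose_sub_sub_one (y : R) (m : ℕ) :
    choose (m - 1 - y) m = (-1) ^ m * choose y m := by
  rw [show (m - 1 - y : R) = -(y - m + 1) by abel, choose_neg,
    show y - m + 1 + m - 1 = y by abel, Units.smul_def, zsmul_eq_mul, Int.cast_negOnePow_natCast]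

theorem choose_mul_choose_sub (x : R) {n k : ℕ} (hk : k ≤ n) :
    choose x k * choose (x - k) (n - k) = n.choose k * choose x n := by
  rw [← choose_smul_choose x hk, nsmul_eq_mul]

theorem succ_mul_choose_succ (x : R) (m : ℕ) :
    (m + 1) * choose x (m + 1) = x * choose (x - 1) m := by
  simpa [choose_one_right] using (choose_mul_choose_sub x (Nat.le_add_left 1 m)).symm

theorem choose_eq_eval_descPochhammer {K : Type*} [Field K] [CharZero K] (x : K) (m : ℕ) :
    choose x m = (m.factorial : K)⁻¹ * (descPochhammer K m).eval x := by
  rw [choose_eq_smul, ← aeval_eq_smeval, aeval_def, eval₂_eq_eval_map, descPochhammer_map,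
    smul_eq_mul]

end Ring

theorem genBinom_eq_choose (x : ℂ) (m : ℕ) : genBinom x m = Ring.choose x m := by
  rw [Ring.choose_eq_eval_descPochhammer, descPochhammer_eval_eq_prod_range, genBinom,
    div_eq_inv_mul]

namespace Polynomial

theorem eq_zero_of_eval_sub_one_eq {R : Type*} [CommRing R] [IsDomain R] [CharZero R]
    {p : R[X]} (hp : ∀ x, p.eval (x - 1) = p.eval x) {a : R} (ha : p.IsRoot a) : p = 0 := by
  have h_shift (m : ℕ) : p.eval (a - m) = p.eval a := by
    induction m with
    | zero => simp
    | succ m ih => rw [Nat.cast_succ, ← sub_sub, hp, ih]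
  have h_inj : Function.Injective fun m : ℕ ↦ a - m :=
    fun _ _ h ↦ Nat.cast_injective (sub_right_injective h)
  refine p.eq_zero_of_infinite_isRoot (Set.infinite_of_injective_forall_mem h_inj fun m ↦ ?_)
  simpa [IsRoot, h_shift] using ha

theorem sum_range_neg_one_pow_mul_choose_mul_eval_eq_zero {R : Type*} [CommRing R]
    {P : R[X]} {n : ℕ} (hP : P.natDegree < n) :
    ∑ k ∈ range (n + 1), (-1) ^ (n - k) * (n.choose k : R) * P.eval (k : R) = 0 := by
  have h_diff := congr_fun (fwdDiff_iter_eq_zero_of_degree_lt hP) 0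
  rw [fwdDiff_iter_eq_sum_shift] at h_diff
  simpa [zsmul_eq_mul] using h_diff

variable {K : Type*} [Field K] [CharZero K]

theorem eval_choose (p : K[X]) (m : ℕ) (c : K) :
    (Ring.choose p m).eval c = Ring.choose (p.eval c) m :=
  Ring.map_choose (evalRingHom c) p m

theorem natDegree_choose_le (p : K[X]) (m : ℕ) :
    (Ring.choose p m).natDegree ≤ m * p.natDegree := by
  have h : Ring.choose p m = C (m.factorial : K)⁻¹ * (descPochhammer K m).comp p :=
    Polynomial.funext fun c ↦ by simp [eval_choose, Ring.choose_eq_eval_descPochhammer]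
  rw [h]
  refine (natDegree_C_mul_le _ _).trans (natDegree_comp_le.trans ?_)
  rw [descPochhammer_natDegree]

end Polynomial

section Rothe

variable {R : Type*} [Ring R] [BinomialRing R]

noncomputable def rotheSum (t : ℕ → R) (B : R) (n : ℕ) (c : R) : R :=
  ∑ k ∈ range (n + 1), t k * Ring.choose (c - B * k) (n - k)

theorem rotheSum_succ (t : ℕ → R) (B : R) (n : ℕ) (c : R) :
    rotheSum t B (n + 1) c = rotheSum t B (n + 1) (c - 1) + rotheSum t B n (c - 1) := by
  have h_pascal (k : ℕ) (hk : k ≤ n) : Ring.choose (c - B * k) (n + 1 - k) =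
      Ring.choose (c - 1 - B * k) (n + 1 - k) + Ring.choose (c - 1 - B * k) (n - k) := by
    rw [Nat.sub_add_comm hk, Ring.choose_sub_one_add, sub_right_comm]
  simp only [rotheSum, sum_range_succ _ (n + 1), Nat.sub_self, Ring.choose_zero_right]
  rw [sum_congr rfl fun k hk ↦ by rw [h_pascal k (Nat.lt_succ_iff.mp (mem_range.mp hk)), mul_add],
    sum_add_distrib]
  abel

variable {K : Type*} [Field K] [CharZero K]

theorem rotheSum_eq_eval (t : ℕ → K) (B : K) (n : ℕ) (c : K) :
    rotheSum t B n c =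
      (∑ k ∈ range (n + 1), C (t k) * Ring.choose (X - C (B * k)) (n - k)).eval c := by
  simp [rotheSum, eval_finsetSum, eval_choose]

theorem div_mul_choose_mul_choose_sub_eq (a x : K) (hx : x ≠ 0) {n k : ℕ} (hk : k ≤ n + 1) :
    a / x * Ring.choose x k * Ring.choose (n - x) (n + 1 - k) =
      (-1) ^ (n + 1 - k) * (n + 1).choose k * (a / (n + 1) * Ring.choose (x - 1) n) := by
  have h_neg : Ring.choose (n - x) (n + 1 - k) =
      (-1) ^ (n + 1 - k) * Ring.choose (x - k) (n + 1 - k) := by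
    rw [← Ring.choose_sub_sub_one]
    congr 1
    push_cast [hk]
    ring
  have h_succ := Ring.succ_mul_choose_succ x n
  have h_mul := Ring.choose_mul_choose_sub x hk
  rw [h_neg]
  field_simp
  linear_combination (a * (n + 1)) * h_mul + (a * (n + 1).choose k) * h_succ

noncomputable def rotheCoeff (A B : K) (k : ℕ) : K :=
  A / (A + B * k) * Ring.choose (A + B * k) k

theorem rotheSum_rotheCoeff_natCast_sub_eq_zero (A B : K) (n : ℕ)
    (h : ∀ k ≤ n + 1, A + B * k ≠ 0) : rotheSum (rotheCoeff A B) B (n + 1) (n - A) = 0 := by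
  set P : K[X] := Ring.choose (C B * X + C (A - 1)) n
  have hP : P.natDegree < n + 1 :=
    Nat.lt_succ_of_le ((natDegree_choose_le _ n).trans
      ((Nat.mul_le_mul_left n natDegree_linear_le).trans_eq (mul_one n)))
  have h_term (k : ℕ) (hk : k ∈ range (n + 2)) :
      rotheCoeff A B k * Ring.choose (n - A - B * k) (n + 1 - k) =
        A / (n + 1) * ((-1) ^ (n + 1 - k) * (n + 1).choose k * P.eval (k : K)) := by
    have hk' : k ≤ n + 1 := Nat.lt_succ_iff.mp (mem_range.mp hk)
    rw [rotheCoeff, sub_sub, div_mul_choose_mul_choose_sub_eq A _ (h k hk') hk']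
    simp only [P, eval_choose, eval_add, eval_mul, eval_C, eval_X]
    rw [show B * k + (A - 1) = A + B * k - 1 by ring]
    ring
  rw [rotheSum, sum_congr rfl h_term, ← mul_sum,
    sum_range_neg_one_pow_mul_choose_mul_eval_eq_zero hP, mul_zero]

theorem choose_add_eq_rotheSum (A B c : K) (n : ℕ) (h : ∀ k ≤ n, A + B * k ≠ 0) :
    Ring.choose (A + c) n = rotheSum (rotheCoeff A B) B n c := by
  induction n generalizing c with
  | zero => simp [rotheSum, rotheCoeff, div_self (by simpa using h 0 le_rfl)]
  | succ n ih =>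
    set p : K[X] :=
      (∑ k ∈ range (n + 2), C (rotheCoeff A B k) * Ring.choose (X - C (B * k)) (n + 1 - k)) -
        Ring.choose (C A + X) (n + 1)
    have hp (c : K) :
        p.eval c = rotheSum (rotheCoeff A B) B (n + 1) c - Ring.choose (A + c) (n + 1) := by
      simp [p, rotheSum_eq_eval, eval_choose]
    have h_periodic (c : K) : p.eval (c - 1) = p.eval c := by
      rw [hp, hp, rotheSum_succ _ _ n c, ← ih (c - 1) fun k hk ↦ h k (Nat.le_succ_of_le hk),
        Ring.choose_sub_one_add (A + c), ← add_sub_assoc]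
      ring
    have h_root : p.IsRoot (n - A) := by
      rw [IsRoot, hp, rotheSum_rotheCoeff_natCast_sub_eq_zero A B n h, add_sub_cancel,
        Ring.choose_natCast, Nat.choose_eq_zero_of_lt n.lt_succ_self]
      simp
    have h_eval := hp c
    rw [eq_zero_of_eval_sub_one_eq h_periodic h_root, eval_zero, eq_comm, sub_eq_zero] at h_eval
    exact h_eval.symm

end Rothe

/-- Rothe's summation formula:
`C(A+C,n) = ∑_{k=0}^{n} (A/(A+Bk)) C(A+Bk,k) C(C-Bk,n-k)`. -/
theorem rothe_summation (A B C : ℂ) (n : ℕ) (h : ∀ k ≤ n, A + B * k ≠ 0) :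
    genBinom (A + C) n =
      ∑ k ∈ Finset.range (n + 1),
        A / (A + B * k) * genBinom (A + B * k) k * genBinom (C - B * k) (n - k) := by
  simp only [genBinom_eq_choose]
  exact choose_add_eq_rotheSum A B C n h
end

section
/- Abel's generalization of the binomial theorem: for all complex numbers A, B, C with A ≠ 0 and A + Bk ≠ 0 for every integer k with 1 ≤ k ≤ n, and for every nonnegative integer n, one has (A+C)^n = ∑_{k=0}^{n} C(n,k) · A · (A+Bk)^{k-1} · (C-Bk)^{n-k}, where for k = 0 the term A·(A)^{-1}·C^n is interpreted as C^n. -/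
open Polynomial Finset

lemma abel_fd (n : ℕ) (Q : ℂ[X]) (hQ : Q.degree < n) :
    ∑ k ∈ range (n+1), (-1:ℂ)^k * (n.choose k) * Q.eval (k:ℂ) = 0 := by
  induction n generalizing Q with
  | zero =>
    have hQ0 : Q = 0 := by
      rw [← Polynomial.degree_eq_bot]
      exact Nat.WithBot.lt_zero_iff.mp (by simpa using hQ)
    simp [hQ0]
  | succ n ih =>
    set R : ℂ[X] := Q.comp (X + 1) - Q with hRdef
    have hRdeg : R.degree < n := by
      by_cases hQ0 : Q = 0
      · simp only [hRdef, hQ0, Polynomial.zero_comp, sub_zero, Polynomial.degree_zero]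
        exact bot_lt_iff_ne_bot.mpr (by exact_mod_cast WithBot.coe_ne_bot)
      by_cases hQc : Q.natDegree = 0
      · obtain ⟨c, rfl⟩ := Polynomial.natDegree_eq_zero.mp hQc
        simp only [hRdef, Polynomial.C_comp, sub_self, Polynomial.degree_zero]
        exact bot_lt_iff_ne_bot.mpr (by exact_mod_cast WithBot.coe_ne_bot)
      · have hXC : (X + 1 : ℂ[X]) = X + Polynomial.C 1 := by simp
        have hnd1 : (X + 1 : ℂ[X]).natDegree = 1 := by
          rw [hXC]; exact Polynomial.natDegree_X_add_C 1
        have hlc : (Q.comp (X + 1)).leadingCoeff = Q.leadingCoeff := by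
          rw [Polynomial.leadingCoeff_comp (by rw [hnd1]; exact one_ne_zero)]
          rw [hXC, Polynomial.leadingCoeff_X_add_C]
          simp
        have hcompne : Q.comp (X + 1) ≠ 0 := by
          rw [← Polynomial.leadingCoeff_ne_zero, hlc, Polynomial.leadingCoeff_ne_zero]
          exact hQ0
        have hcomp : (Q.comp (X + 1)).degree = Q.degree := by
          rw [Polynomial.degree_eq_natDegree hcompne, Polynomial.degree_eq_natDegree hQ0,
            Polynomial.natDegree_comp, hnd1, mul_one]
        have h1 : R.degree < Q.degree := by
          have := Polynomial.degree_sub_lt hcomp hcompne hlc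
          rwa [← hRdef, hcomp] at this
        have h2 : Q.degree ≤ (n : WithBot ℕ) := by
          rw [Polynomial.degree_eq_natDegree hQ0] at hQ ⊢
          exact_mod_cast Nat.lt_succ_iff.mp (by exact_mod_cast hQ)
        exact lt_of_lt_of_le h1 h2
    have hReval : ∀ k : ℕ, R.eval (k : ℂ) = Q.eval ((k : ℂ) + 1) - Q.eval (k:ℂ) := by
      intro k
      simp [hRdef, Polynomial.eval_comp]
    have g0 : ∑ k ∈ range (n+2), (-1:ℂ)^k * (n.choose k) * Q.eval (k:ℂ)
        = ∑ k ∈ range (n+1), (-1:ℂ)^k * (n.choose k) * Q.eval (k:ℂ) := by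
      rw [Finset.sum_range_succ]
      simp [Nat.choose_eq_zero_of_lt (Nat.lt_succ_self n)]
    have g1 : ∑ k ∈ range (n+2), (-1:ℂ)^k * (n.choose k) * Q.eval (k:ℂ)
        = (∑ i ∈ range (n+1), (-1:ℂ)^(i+1) * (n.choose (i+1)) * Q.eval ((i+1:ℕ):ℂ))
          + (-1:ℂ)^0 * (n.choose 0) * Q.eval ((0:ℕ):ℂ) := Finset.sum_range_succ' _ _
    have g2 : ∑ k ∈ range (n+2), (-1:ℂ)^k * ((n+1).choose k) * Q.eval (k:ℂ)
        = (∑ i ∈ range (n+1), (-1:ℂ)^(i+1) * ((n+1).choose (i+1)) * Q.eval ((i+1:ℕ):ℂ))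
          + (-1:ℂ)^0 * ((n+1).choose 0) * Q.eval ((0:ℕ):ℂ) := Finset.sum_range_succ' _ _
    rw [g2]
    have g3 : ∀ i ∈ range (n+1),
        (-1:ℂ)^(i+1) * ((n+1).choose (i+1)) * Q.eval ((i+1:ℕ):ℂ)
        = (-(-1:ℂ)^i * (n.choose i) * R.eval (i:ℂ) - (-1:ℂ)^i * (n.choose i) * Q.eval (i:ℂ))
          + (-1:ℂ)^(i+1) * (n.choose (i+1)) * Q.eval ((i+1:ℕ):ℂ) := by
      intro i _
      have hp : ((n+1).choose (i+1) : ℂ) = (n.choose i : ℂ) + (n.choose (i+1) : ℂ) := by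
        rw [Nat.choose_succ_succ]; push_cast; ring
      rw [hp, hReval i]
      push_cast
      ring
    rw [Finset.sum_congr rfl g3, Finset.sum_add_distrib, Finset.sum_sub_distrib]
    have g4 : ∑ i ∈ range (n+1), -(-1:ℂ)^i * (n.choose i) * R.eval (i:ℂ) = 0 := by
      have h4 : ∑ i ∈ range (n+1), -(-1:ℂ)^i * (n.choose i) * R.eval (i:ℂ)
          = -∑ i ∈ range (n+1), (-1:ℂ)^i * (n.choose i) * R.eval (i:ℂ) := by
        rw [← Finset.sum_neg_distrib]
        exact Finset.sum_congr rfl (fun i _ => by ring)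
      rw [h4, ih R hRdeg, neg_zero]
    have g5 : (∑ i ∈ range (n+1), (-1:ℂ)^(i+1) * (n.choose (i+1)) * Q.eval ((i+1:ℕ):ℂ))
          + (-1:ℂ)^0 * (n.choose 0) * Q.eval ((0:ℕ):ℂ)
        = ∑ i ∈ range (n+1), (-1:ℂ)^i * (n.choose i) * Q.eval (i:ℂ) := by
      rw [← g1, g0]
    simp only [Nat.choose_zero_right] at g5 ⊢
    rw [g4]
    linear_combination g5

noncomputable def aa (A B : ℂ) : ℕ → ℂ
  | 0 => 1
  | (k+1) => A * (A + B*(k+1))^k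

lemma abel_eval_neg (A B : ℂ) (m : ℕ) :
    ∑ k ∈ range (m+2), ((m+1).choose k : ℂ) * aa A B k * (-A - B*k)^(m+1-k) = 0 := by
  set Q : ℂ[X] := (Polynomial.C A + Polynomial.C B * X)^m with hQdef
  have hQdeg : Q.degree < ((m+1 : ℕ) : WithBot ℕ) := by
    have h1 : Q.natDegree ≤ m := by
      calc Q.natDegree ≤ m * (Polynomial.C A + Polynomial.C B * X).natDegree :=
            Polynomial.natDegree_pow_le
        _ ≤ m * 1 := by
            apply Nat.mul_le_mul_left
            apply le_trans (Polynomial.natDegree_add_le _ _)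
            simp only [Polynomial.natDegree_C, max_le_iff]
            exact ⟨Nat.zero_le 1, le_trans (Polynomial.natDegree_C_mul_le _ _) (by simp)⟩
        _ = m := mul_one m
    calc Q.degree ≤ (Q.natDegree : WithBot ℕ) := Polynomial.degree_le_natDegree
      _ < ((m+1 : ℕ) : WithBot ℕ) := by exact_mod_cast Nat.lt_succ_of_le h1
  have hQeval : ∀ k : ℕ, Q.eval (k : ℂ) = (A + B*k)^m := by
    intro k; simp [hQdef]
  have hfd := abel_fd (m+1) Q hQdeg
  have hterm : ∀ k ∈ range (m+2),
      ((m+1).choose k : ℂ) * aa A B k * (-A - B*k)^(m+1-k)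
      = ((-1:ℂ)^(m+1) * A) * ((-1:ℂ)^k * ((m+1).choose k) * Q.eval (k:ℂ)) := by
    intro k hk
    have hkle : k ≤ m + 1 := Nat.lt_succ_iff.mp (Finset.mem_range.mp hk)
    have hneg : (-A - B*(k:ℕ))^(m+1-k) = (-1:ℂ)^(m+1-k) * (A + B*k)^(m+1-k) := by
      rw [show -A - B*(k:ℕ) = (-1) * (A + B*k) by ring, mul_pow]
    have hsign : (-1:ℂ)^(m+1-k) * (-1:ℂ)^k = (-1:ℂ)^(m+1) := by
      rw [← pow_add, Nat.sub_add_cancel hkle]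
    rw [hQeval, hneg]
    match k with
    | 0 =>
      simp [aa]
      rw [pow_succ]
      ring
    | (j+1) =>
      have hj : j ≤ m := Nat.lt_succ_iff.mp hkle
      have he : m + 1 - (j + 1) = m - j := by omega
      have hpows : (A + B*((j:ℂ)+1))^j * (A + B*((j:ℂ)+1))^(m-j) = (A + B*((j:ℂ)+1))^m := by
        rw [← pow_add]
        congr 1
        omega
      have hsq : (-1:ℂ)^(j+1) * (-1:ℂ)^(j+1) = 1 := by
        rw [← pow_add, ← two_mul, pow_mul]
        norm_num
      have hsign' : (-1:ℂ)^(m-j) * (-1:ℂ)^(j+1) = (-1:ℂ)^(m+1) := by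
        rw [← pow_add]
        congr 1
        omega
      have hs2 : (-1:ℂ)^(m-j) = (-1:ℂ)^(m+1) * (-1:ℂ)^(j+1) := by
        calc (-1:ℂ)^(m-j) = (-1:ℂ)^(m-j) * ((-1:ℂ)^(j+1) * (-1:ℂ)^(j+1)) := by
              rw [hsq, mul_one]
          _ = ((-1:ℂ)^(m-j) * (-1:ℂ)^(j+1)) * (-1:ℂ)^(j+1) := by ring
          _ = (-1:ℂ)^(m+1) * (-1:ℂ)^(j+1) := by rw [hsign']
      simp only [aa, he]
      push_cast
      calc ((m+1).choose (j+1) : ℂ) * (A * (A + B*((j:ℂ)+1))^j) *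
            ((-1:ℂ)^(m-j) * (A + B*((j:ℂ)+1))^(m-j))
          = ((-1:ℂ)^(m+1) * A) * ((-1:ℂ)^(j+1) * ((m+1).choose (j+1) : ℂ) *
              ((A + B*((j:ℂ)+1))^j * (A + B*((j:ℂ)+1))^(m-j))) := by
            rw [hs2]; ring
        _ = ((-1:ℂ)^(m+1) * A) * ((-1:ℂ)^(j+1) * ((m+1).choose (j+1) : ℂ) *
              (A + B*((j:ℂ)+1))^m) := by rw [hpows]
  rw [Finset.sum_congr rfl hterm, ← Finset.mul_sum, hfd, mul_zero]

lemma abel_poly (A B : ℂ) (n : ℕ) :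
    (Polynomial.C A + X : ℂ[X])^n
      = ∑ k ∈ range (n+1),
          Polynomial.C ((n.choose k : ℂ) * aa A B k) * (X - Polynomial.C (B*k))^(n-k) := by
  induction n with
  | zero => simp [aa]
  | succ n ih =>
    set Rp : ℂ[X] := ∑ k ∈ range (n+2),
        Polynomial.C (((n+1).choose k : ℂ) * aa A B k) * (X - Polynomial.C (B*(k:ℕ)))^(n+1-k)
      with hRp
    have hdRp : Polynomial.derivative Rp = Polynomial.C ((n:ℂ)+1) * (Polynomial.C A + X)^n := by
      rw [hRp, Polynomial.derivative_sum, Finset.sum_range_succ]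
      have hlast : Polynomial.derivative (Polynomial.C (((n+1).choose (n+1) : ℂ) * aa A B (n+1))
          * (X - Polynomial.C (B*((n+1:ℕ):ℂ)))^(n+1-(n+1))) = 0 := by
        simp
      rw [hlast, add_zero]
      have hterm : ∀ k ∈ range (n+1),
          Polynomial.derivative (Polynomial.C (((n+1).choose k : ℂ) * aa A B k)
            * (X - Polynomial.C (B*(k:ℕ)))^(n+1-k))
          = Polynomial.C ((n:ℂ)+1) *
            (Polynomial.C ((n.choose k : ℂ) * aa A B k) * (X - Polynomial.C (B*(k:ℕ)))^(n-k)) := by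
        intro k hk
        have hkn : k ≤ n := Nat.lt_succ_iff.mp (Finset.mem_range.mp hk)
        have hco : ((n+1).choose k : ℂ) * ((n+1-k : ℕ) : ℂ) = ((n:ℂ)+1) * (n.choose k : ℂ) := by
          have h := congrArg (fun t : ℕ => (t : ℂ)) (Nat.choose_mul_succ_eq n k).symm
          push_cast [Nat.cast_sub (show k ≤ n+1 by omega)] at h ⊢
          linear_combination h
        have hcoef : (((n+1).choose k : ℂ) * aa A B k) * ((n+1-k : ℕ):ℂ)
            = ((n:ℂ)+1) * ((n.choose k:ℂ) * aa A B k) := by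
          linear_combination aa A B k * hco
        rw [Polynomial.derivative_C_mul, Polynomial.derivative_pow]
        have hd1 : Polynomial.derivative (X - Polynomial.C (B*(k:ℕ))) = 1 := by simp
        have he1 : n + 1 - k - 1 = n - k := by omega
        rw [hd1, he1, mul_one, ← mul_assoc, ← Polynomial.C_mul, hcoef, Polynomial.C_mul,
          mul_assoc]
      rw [Finset.sum_congr rfl hterm, ← Finset.mul_sum, ← ih]
    have hdL : Polynomial.derivative ((Polynomial.C A + X : ℂ[X])^(n+1))
        = Polynomial.C ((n:ℂ)+1) * (Polynomial.C A + X)^n := by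
      rw [Polynomial.derivative_pow]
      simp
    set D : ℂ[X] := (Polynomial.C A + X)^(n+1) - Rp with hD
    have hdD : Polynomial.derivative D = 0 := by
      rw [hD, Polynomial.derivative_sub, hdL, hdRp, sub_self]
    have hDC : D = Polynomial.C (D.coeff 0) :=
      Polynomial.eq_C_of_natDegree_eq_zero (Polynomial.natDegree_eq_zero_of_derivative_eq_zero hdD)
    have hev : D.eval (-A) = 0 := by
      rw [hD, Polynomial.eval_sub, Polynomial.eval_pow, Polynomial.eval_add, Polynomial.eval_C,
        Polynomial.eval_X]
      have h1 : (A + -A)^(n+1) = (0:ℂ) := by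
        rw [add_neg_cancel]
        exact zero_pow (Nat.succ_ne_zero n)
      rw [h1, hRp, Polynomial.eval_finset_sum]
      have h2 : ∀ k ∈ range (n+2),
          Polynomial.eval (-A) (Polynomial.C (((n+1).choose k : ℂ) * aa A B k)
            * (X - Polynomial.C (B*(k:ℕ)))^(n+1-k))
          = ((n+1).choose k : ℂ) * aa A B k * (-A - B*k)^(n+1-k) := by
        intro k _
        simp [mul_assoc]
      rw [Finset.sum_congr rfl h2, abel_eval_neg A B n]
      ring
    have hDz : D = 0 := by
      rw [hDC] at hev ⊢
      rw [Polynomial.eval_C] at hev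
      rw [hev, Polynomial.C_0]
    have := sub_eq_zero.mp (by rw [← hD]; exact hDz)
    exact this

/-- Abel's generalization of the binomial theorem:
`(A+C)^n = ∑_{k=0}^{n} C(n,k) A (A+Bk)^{k-1} (C-Bk)^{n-k}`,
where for `k = 0` the factor `(A+B·0)^{-1}` is the inverse of `A` (so the
`k = 0` term is `C^n` since `A ≠ 0`). -/
theorem abel_binomial (A B C : ℂ) (n : ℕ) (hA : A ≠ 0)
    (h : ∀ k : ℕ, 1 ≤ k → k ≤ n → A + B * k ≠ 0) :
    (A + C) ^ n =
      ∑ k ∈ Finset.range (n + 1),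
        (n.choose k : ℂ) * A * (A + B * k) ^ ((k : ℤ) - 1) * (C - B * k) ^ (n - k) := by
  have hp := congrArg (Polynomial.eval C) (abel_poly A B n)
  rw [Polynomial.eval_pow, Polynomial.eval_add, Polynomial.eval_C, Polynomial.eval_X,
    Polynomial.eval_finset_sum] at hp
  rw [hp]
  apply Finset.sum_congr rfl
  intro k hk
  match k with
  | 0 =>
    simp only [aa, Nat.choose_zero_right, Nat.cast_zero, mul_zero, sub_zero, add_zero,
      Nat.cast_one, one_mul, mul_one, Nat.sub_zero, Polynomial.eval_mul, Polynomial.eval_pow,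
      Polynomial.eval_sub, Polynomial.eval_X, Polynomial.eval_C, Polynomial.C_0,
      Polynomial.map_mul]
    rw [show ((0:ℤ)) - 1 = -1 by norm_num, zpow_neg_one, mul_inv_cancel₀ hA]
    simp
  | (j+1) =>
    have hz : (((j+1:ℕ)):ℤ) - 1 = ((j:ℕ):ℤ) := by push_cast; ring
    rw [hz, zpow_natCast]
    simp only [aa, Polynomial.eval_mul, Polynomial.eval_pow, Polynomial.eval_sub,
      Polynomial.eval_X, Polynomial.eval_C]
    push_cast
    ring
end

section
/- Product rewriting identity for q-shifted factorials with integer differences: let q be a complex number with 0 < |q| < 1, let r be a positive integer, let x_1, …, x_r be nonzero complex numbers with x_i ≠ x_j for i < j (and such that all factors below are well defined), and let k_1, …, k_r be integers with |k| = k_1 + ⋯ + k_r. Then ∏_{i,j=1}^{r} ((x_i/x_j) q; q)_{k_i - k_j} = (-1)^{(r-1)|k|} q^{-|k|(|k|-1)/2 + r ∑_{i=1}^{r} k_i(k_i-1)/2} ∏_{i=1}^{r} x_i^{r k_i - |k|} ∏_{1≤i<j≤r} ( (x_i q^{k_i} - x_j q^{k_j}) / (x_i - x_j) ). -/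
/-- The q-shifted factorial with integer index, `(a;q)_k = (a;q)_∞ / (a q^k;q)_∞`. -/
noncomputable def qPochInt (a q : ℂ) (k : ℤ) : ℂ :=
  qPochInf a q / qPochInf (a * q ^ k) q

open Finset

lemma prod_zpow_eq_zpow_sum {α G₀ : Type*} [CommGroupWithZero G₀] {a : G₀} (ha : a ≠ 0)
    (s : Finset α) (f : α → ℤ) : ∏ i ∈ s, a ^ f i = a ^ ∑ i ∈ s, f i := by
  induction s using Finset.cons_induction with
  | empty => simp
  | cons b s hb ih => rw [prod_cons, sum_cons, ih, zpow_add₀ ha]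

lemma natCast_choose_two_mul_two (n : ℕ) : (n.choose 2 : ℤ) * 2 = n * (n - 1) := by
  have h : (n.choose 2 : ℚ) * 2 = n * (n - 1) := by rw [Nat.cast_choose_two]; ring
  exact_mod_cast h

lemma prod_range_neg_mul_pow {K : Type*} [CommRing K] (c q : K) (n : ℕ) :
    ∏ j ∈ range n, (-c * q ^ j) = (-c) ^ n * q ^ n.choose 2 := by
  rw [prod_mul_distrib, prod_const, card_range, prod_pow_eq_pow_sum, sum_range_id,
    Nat.choose_two_right]

lemma prod_range_one_sub_mul_pow_reverse {K : Type*} [Field K] {c q : K} (hc : c ≠ 0)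
    (hq : q ≠ 0) (n : ℕ) :
    ∏ j ∈ range n, (1 - c * q ^ j) =
      (-c) ^ n * q ^ n.choose 2 * ∏ j ∈ range n, (1 - c⁻¹ * q ^ (1 - n : ℤ) * q ^ j) := by
  have hreflect : ∀ j ∈ range n,
      1 - c⁻¹ * q ^ (1 - n : ℤ) * q ^ (n - 1 - j) = 1 - c⁻¹ * (q ^ j)⁻¹ := by
    intro j hj
    have hj : j < n := mem_range.mp hj
    rw [← zpow_natCast, ← zpow_natCast, ← zpow_neg, mul_assoc, ← zpow_add₀ hq]
    congr 3
    omega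
  rw [← prod_range_reflect (fun j => 1 - c⁻¹ * q ^ (1 - n : ℤ) * q ^ j),
    prod_congr rfl hreflect, ← prod_range_neg_mul_pow, ← prod_mul_distrib]
  refine prod_congr rfl fun j _ => ?_
  field_simp
  ring

lemma one_sub_mul_prod_range_one_sub_mul_mul_pow {K : Type*} [CommRing K] (u q : K) (n : ℕ) :
    (1 - u) * ∏ j ∈ range n, (1 - u * q * q ^ j) =
      (1 - u * q ^ n) * ∏ j ∈ range n, (1 - u * q ^ j) := by
  have h := (prod_range_succ' (fun j => 1 - u * q ^ j) n).symm.trans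
    (prod_range_succ (fun j => 1 - u * q ^ j) n)
  simp only [pow_succ', pow_zero, mul_one, ← mul_assoc] at h
  linear_combination h

lemma multipliable_one_sub_mul_pow (a : ℂ) {q : ℂ} (hq : ‖q‖ < 1) :
    Multipliable fun j : ℕ => 1 - a * q ^ j := by
  simp_rw [sub_eq_add_neg]
  refine multipliable_one_add_of_summable ?_
  simpa [norm_mul, norm_pow] using
    (summable_geometric_of_lt_one (norm_nonneg q) hq).mul_left ‖a‖

lemma qPochInf_eq_prod_range_mul (a : ℂ) {q : ℂ} (hq : ‖q‖ < 1) (n : ℕ) :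
    qPochInf a q = (∏ j ∈ range n, (1 - a * q ^ j)) * qPochInf (a * q ^ n) q := by
  have hshift : ∀ j, 1 - a * q ^ n * q ^ j = 1 - a * q ^ (j + n) := fun j => by ring
  have h := Multipliable.prod_mul_tprod_nat_mul' (f := fun j => 1 - a * q ^ j)
    ((multipliable_one_sub_mul_pow (a * q ^ n) hq).congr hshift)
  rw [qPochInf, qPochInf, ← h, tprod_congr hshift]

lemma qPochInt_zero {a q : ℂ} (h : qPochInf a q ≠ 0) : qPochInt a q 0 = 1 := by
  rw [qPochInt, zpow_zero, mul_one, div_self h]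

lemma qPochInt_natCast (a : ℂ) {q : ℂ} (hq : ‖q‖ < 1) (n : ℕ)
    (h : qPochInf (a * q ^ (n : ℤ)) q ≠ 0) :
    qPochInt a q n = ∏ j ∈ range n, (1 - a * q ^ j) := by
  rw [zpow_natCast] at h
  rw [qPochInt, zpow_natCast, qPochInf_eq_prod_range_mul a hq n, mul_div_cancel_right₀ _ h]

lemma qPochInt_neg_natCast_mul_prod (a : ℂ) {q : ℂ} (hq0 : q ≠ 0) (hq : ‖q‖ < 1) (n : ℕ)
    (h : qPochInf (a * q ^ (-n : ℤ)) q ≠ 0) :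
    qPochInt a q (-n) * ∏ j ∈ range n, (1 - a * q ^ (-n : ℤ) * q ^ j) = 1 := by
  have hsplit := qPochInf_eq_prod_range_mul (a * q ^ (-n : ℤ)) hq n
  rw [mul_assoc, ← zpow_natCast q n, ← zpow_add₀ hq0, neg_add_cancel, zpow_zero, mul_one]
    at hsplit
  rw [hsplit] at h
  rw [qPochInt, hsplit, div_mul_eq_mul_div, div_eq_one_iff_eq h, mul_comm]

lemma one_sub_mul_qPochInt_mul_qPochInt_neg {q u : ℂ} (hq0 : q ≠ 0) (hq : ‖q‖ < 1)
    (hu : u ≠ 0) (n : ℕ) (hA : qPochInf (u * q * q ^ (n : ℤ)) q ≠ 0)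
    (hB : qPochInf (u⁻¹ * q * q ^ (-n : ℤ)) q ≠ 0) :
    (1 - u) * (qPochInt (u * q) q n * qPochInt (u⁻¹ * q) q (-n)) =
      (-u) ^ n * q ^ n.choose 2 * (1 - u * q ^ n) := by
  have hinv := qPochInt_neg_natCast_mul_prod (u⁻¹ * q) hq0 hq n hB
  have hrev := prod_range_one_sub_mul_pow_reverse hu hq0 n
  have hshift := one_sub_mul_prod_range_one_sub_mul_mul_pow u q n
  rw [show u⁻¹ * q * q ^ (-n : ℤ) = u⁻¹ * q ^ (1 - n : ℤ) by
    rw [sub_eq_add_neg, zpow_add₀ hq0, zpow_one, mul_assoc]] at hinv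
  rw [qPochInt_natCast _ hq n hA]
  linear_combination qPochInt (u⁻¹ * q) q (-n) * hshift +
    (1 - u * q ^ n) * qPochInt (u⁻¹ * q) q (-n) * hrev +
    (1 - u * q ^ n) * (-u) ^ n * q ^ n.choose 2 * hinv

/-- The exponent `((a - b) ^ 2 - a - b) / 2` is `C(a - b, 2) - b`, written symmetrically in `a`
and `b` so that the case `a < b` follows from `b < a` by swapping. -/
lemma qPochInt_mul_qPochInt_swap {q x y : ℂ} (hq0 : q ≠ 0) (hq : ‖q‖ < 1) (hx : x ≠ 0)
    (hy : y ≠ 0) (hxy : x ≠ y) (a b : ℤ) (hA : qPochInf (x / y * q * q ^ (a - b)) q ≠ 0)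
    (hB : qPochInf (y / x * q * q ^ (b - a)) q ≠ 0) :
    qPochInt (x / y * q) q (a - b) * qPochInt (y / x * q) q (b - a) =
      (-1) ^ (a + b) * (x ^ (a - b) * y ^ (b - a)) * q ^ (((a - b) ^ 2 - a - b) / 2) *
        ((x * q ^ a - y * q ^ b) / (x - y)) := by
  wlog hba : b ≤ a generalizing x y a b
  · rw [mul_comm, this hy hx hxy.symm b a hB hA (by omega), add_comm b a,
      mul_comm (y ^ _), show (b - a) ^ 2 - b - a = (a - b) ^ 2 - a - b by ring,
      ← neg_div_neg_eq, neg_sub, neg_sub]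
  obtain ⟨n, rfl⟩ : ∃ n : ℕ, a = b + n := ⟨(a - b).toNat, by omega⟩
  simp only [add_sub_cancel_left, sub_add_cancel_left] at hA hB ⊢
  rw [← inv_div x y] at hB ⊢
  have hpair := one_sub_mul_qPochInt_mul_qPochInt_neg hq0 hq (div_ne_zero hx hy) n hA hB
  have hexp : ((n : ℤ) ^ 2 - (b + n) - b) / 2 = (n.choose 2 : ℤ) - b := by
    refine Int.ediv_eq_of_eq_mul_left two_ne_zero ?_
    linear_combination -(natCast_choose_two_mul_two n)
  have hsign : (-1 : ℂ) ^ (b + n + b) = (-1) ^ n := by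
    rw [show b + n + b = n + 2 * b by ring, zpow_add₀ (by norm_num), zpow_mul]
    norm_num
  have hu1 : 1 - x / y ≠ 0 := by
    rwa [sub_ne_zero, ne_comm, Ne, div_eq_one_iff_eq hy]
  rw [eq_div_of_mul_eq hu1 ((mul_comm _ _).trans hpair), hexp, hsign, zpow_sub₀ hq0,
    zpow_add₀ hq0, zpow_neg]
  simp only [zpow_natCast, neg_pow (x / y), div_pow]
  field_simp
  ring

section

variable {ι : Type*} [Fintype ι] [LinearOrder ι]

@[to_additive]
lemma prod_eq_mul_prod_gt_mul_prod_lt {M : Type*} [CommMonoid M] (g : ι → M) (i : ι) :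
    ∏ j, g j = g i * ((∏ j ∈ univ.filter (i < ·), g j) * ∏ j ∈ univ.filter (· < i), g j) := by
  classical
  have hcompl : ({i}ᶜ : Finset ι) = univ.filter (i < ·) ∪ univ.filter (· < i) := by
    ext j
    simp only [mem_compl, mem_singleton, mem_union, mem_filter, mem_univ, true_and]
    rw [lt_or_lt_iff_ne, ne_comm]
  rw [Fintype.prod_eq_mul_prod_compl i, hcompl, prod_union]
  exact disjoint_filter.mpr fun j _ hij hji => lt_asymm hij hji

@[to_additive]
lemma prod_prod_eq_prod_diag_mul_prod_lt {M : Type*} [CommMonoid M] (f : ι → ι → M) :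
    ∏ i, ∏ j, f i j = (∏ i, f i i) * ∏ i, ∏ j ∈ univ.filter (i < ·), (f i j * f j i) := by
  have hswap : ∏ i, ∏ j ∈ univ.filter (· < i), f i j = ∏ i, ∏ j ∈ univ.filter (i < ·), f j i :=
    prod_comm' fun i j => by simp
  rw [prod_congr rfl fun i _ => prod_eq_mul_prod_gt_mul_prod_lt (f i) i]
  simp only [prod_mul_distrib, hswap]

lemma two_mul_sum_sum_lt_of_symm {R : Type*} [CommRing R] (g : ι → ι → R)
    (hg : ∀ i j, g i j = g j i) :
    2 * ∑ i, ∑ j ∈ univ.filter (i < ·), g i j = ∑ i, ∑ j, g i j - ∑ i, g i i := by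
  rw [sum_sum_eq_sum_diag_add_sum_lt, add_sub_cancel_left, mul_sum]
  refine sum_congr rfl fun i _ => ?_
  rw [mul_sum]
  exact sum_congr rfl fun j _ => by rw [hg j i, two_mul]

lemma sum_sum_lt_add (k : ι → ℤ) :
    ∑ i, ∑ j ∈ univ.filter (i < ·), (k i + k j) = (Fintype.card ι - 1) * ∑ i, k i := by
  refine mul_left_cancel₀ two_ne_zero
    ((two_mul_sum_sum_lt_of_symm _ fun i j => add_comm _ _).trans ?_)
  simp only [sum_add_distrib, sum_const, card_univ, nsmul_eq_mul, ← mul_sum]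
  ring

lemma sum_sum_lt_sq_sub_sub_div_two (k : ι → ℤ) :
    ∑ i, ∑ j ∈ univ.filter (i < ·), (((k i - k j) ^ 2 - k i - k j) / 2) =
      -((∑ i, k i) * ((∑ i, k i) - 1) / 2) + Fintype.card ι * ∑ i, (k i * (k i - 1) / 2) := by
  have hC (m : ℤ) : 2 * (m * (m - 1) / 2) = m * (m - 1) :=
    Int.two_mul_ediv_two_of_even m.even_mul_pred_self
  have hhalf (i j : ι) :
      2 * (((k i - k j) ^ 2 - k i - k j) / 2) = (k i - k j) ^ 2 - k i - k j := by
    rw [show (k i - k j) ^ 2 - k i - k j = (k i - k j) * (k i - k j - 1) + 2 * -k j by ring]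
    exact Int.two_mul_ediv_two_of_even ((k i - k j).even_mul_pred_self.add (even_two_mul _))
  have hdouble : 2 * ∑ i, ∑ j ∈ univ.filter (i < ·), (((k i - k j) ^ 2 - k i - k j) / 2) =
      ∑ i, ∑ j ∈ univ.filter (i < ·), ((k i - k j) ^ 2 - k i - k j) := by
    simp only [mul_sum, hhalf]
  have hsumC : 2 * ∑ i, (k i * (k i - 1) / 2) = ∑ i, k i ^ 2 - ∑ i, k i := by
    simp only [mul_sum, hC, ← sum_sub_distrib]
    exact sum_congr rfl fun i _ => by ring
  refine mul_left_cancel₀ (four_ne_zero (α := ℤ)) ?_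
  calc 4 * ∑ i, ∑ j ∈ univ.filter (i < ·), (((k i - k j) ^ 2 - k i - k j) / 2)
      = 2 * ∑ i, ∑ j ∈ univ.filter (i < ·), ((k i - k j) ^ 2 - k i - k j) := by
        rw [← hdouble]; ring
    _ = ∑ i, ∑ j, ((k i - k j) ^ 2 - k i - k j) - ∑ i, ((k i - k i) ^ 2 - k i - k i) :=
        two_mul_sum_sum_lt_of_symm _ fun i j => by ring
    _ = 4 * (-((∑ i, k i) * ((∑ i, k i) - 1) / 2) +
          Fintype.card ι * ∑ i, (k i * (k i - 1) / 2)) := by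
        have hdiag : ∑ i, ((k i - k i) ^ 2 - k i - k i) = -2 * ∑ i, k i := by
          rw [mul_sum]
          exact sum_congr rfl fun i _ => by ring
        rw [hdiag]
        simp only [show ∀ a b : ℤ, (a - b) ^ 2 - a - b = a ^ 2 - a + (b ^ 2 - b) - 2 * (a * b)
          from fun a b => by ring, sum_sub_distrib, sum_add_distrib, ← mul_sum, ← sum_mul,
          sum_const, card_univ, nsmul_eq_mul]
        linear_combination 2 * hC (∑ i, k i) - 2 * (Fintype.card ι : ℤ) * hsumC

lemma prod_prod_lt_zpow_sub_mul_prod_prod_lt_zpow_sub {G₀ : Type*} [CommGroupWithZero G₀]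
    {x : ι → G₀} (hx : ∀ i, x i ≠ 0) (k : ι → ℤ) :
    (∏ i, ∏ j ∈ univ.filter (i < ·), x i ^ (k i - k j)) *
        ∏ i, ∏ j ∈ univ.filter (i < ·), x j ^ (k j - k i) =
      ∏ i, x i ^ (Fintype.card ι * k i - ∑ j, k j) := by
  calc _ = (∏ i, x i ^ (k i - k i)) *
        ∏ i, ∏ j ∈ univ.filter (i < ·), (x i ^ (k i - k j) * x j ^ (k j - k i)) := by
        simp only [sub_self, zpow_zero, prod_const_one, one_mul, prod_mul_distrib]
    _ = ∏ i, ∏ j, x i ^ (k i - k j) :=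
        (prod_prod_eq_prod_diag_mul_prod_lt fun i j => x i ^ (k i - k j)).symm
    _ = _ := prod_congr rfl fun i _ => by
        rw [prod_zpow_eq_zpow_sum (hx i), sum_sub_distrib, sum_const, card_univ, nsmul_eq_mul]

end

theorem qpoch_product_rewrite_general (q : ℂ) (hq0 : 0 < ‖q‖)
    (hq1 : ‖q‖ < 1) (r : ℕ) (x : Fin r → ℂ)
    (hx : ∀ i, x i ≠ 0) (hxx : ∀ i j : Fin r, i < j → x i ≠ x j)
    (k : Fin r → ℤ)
    (hwd : ∀ i j : Fin r, qPochInf (x i / x j * q * q ^ (k i - k j)) q ≠ 0) :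
    ∏ i, ∏ j, qPochInt (x i / x j * q) q (k i - k j) =
      (-1 : ℂ) ^ (((r : ℤ) - 1) * ∑ i, k i) *
        q ^ (-((∑ i, k i) * ((∑ i, k i) - 1) / 2) +
          (r : ℤ) * ∑ i, (k i * (k i - 1) / 2)) *
        (∏ i, x i ^ ((r : ℤ) * k i - ∑ j, k j)) *
        ∏ i, ∏ j ∈ Finset.univ.filter (fun j => i < j),
          (x i * q ^ k i - x j * q ^ k j) / (x i - x j) := by
  have hq : q ≠ 0 := norm_pos_iff.mp hq0
  have hdiag (i : Fin r) : qPochInt (x i / x i * q) q (k i - k i) = 1 := by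
    have h := hwd i i
    rw [sub_self, zpow_zero, mul_one] at h
    rw [sub_self, qPochInt_zero h]
  have hpair (i : Fin r) (j) (hj : j ∈ univ.filter (i < ·)) :=
    qPochInt_mul_qPochInt_swap hq hq1 (hx i) (hx j) (hxx i j (mem_filter.mp hj).2) (k i) (k j)
      (hwd i j) (hwd j i)
  rw [prod_prod_eq_prod_diag_mul_prod_lt, prod_congr rfl fun i _ => hdiag i, prod_const_one,
    one_mul, prod_congr rfl fun i _ => prod_congr rfl (hpair i)]
  simp only [prod_mul_distrib, prod_zpow_eq_zpow_sum hq,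
    prod_zpow_eq_zpow_sum (neg_ne_zero.mpr one_ne_zero : (-1 : ℂ) ≠ 0)]
  rw [sum_sum_lt_add, sum_sum_lt_sq_sub_sub_div_two,
    prod_prod_lt_zpow_sub_mul_prod_prod_lt_zpow_sub hx, Fintype.card_fin]
  ring

/-- Product rewriting identity for q-shifted factorials with integer differences:
`∏_{i,j} ((x_i/x_j)q;q)_{k_i-k_j} = (-1)^{(r-1)|k|}
 q^{-C(|k|,2) + r∑ C(k_i,2)} ∏_i x_i^{r k_i - |k|}
 ∏_{i<j} ((x_i q^{k_i}-x_j q^{k_j})/(x_i-x_j))`. -/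
theorem qpoch_product_rewrite (q : ℂ) (hq0 : 0 < ‖q‖)
    (hq1 : ‖q‖ < 1) (r : ℕ) (hr : 0 < r) (x : Fin r → ℂ)
    (hx : ∀ i, x i ≠ 0) (hxx : ∀ i j : Fin r, i < j → x i ≠ x j)
    (k : Fin r → ℤ)
    (hwd : ∀ i j : Fin r, qPochInf (x i / x j * q * q ^ (k i - k j)) q ≠ 0) :
    ∏ i, ∏ j, qPochInt (x i / x j * q) q (k i - k j) =
      (-1 : ℂ) ^ (((r : ℤ) - 1) * ∑ i, k i) *
        q ^ (-((∑ i, k i) * ((∑ i, k i) - 1) / 2) +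
          (r : ℤ) * ∑ i, (k i * (k i - 1) / 2)) *
        (∏ i, x i ^ ((r : ℤ) * k i - ∑ j, k j)) *
        ∏ i, ∏ j ∈ Finset.univ.filter (fun j => i < j),
          (x i * q ^ k i - x j * q ^ k j) / (x i - x j) :=
  qpoch_product_rewrite_general q hq0 hq1 r x hx hxx k hwd
end
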